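/- arXiv:2108.11721 — 2 statements merged into one kernel-verified Lean document; each statement's English description precedes it below -/
import Mathlib

section
/- Let P be a finite poset, C₁, C₂ maximal chains of P, and suppose there exist α₁ ⋖ β₁ with α₁, β₁ ∈ C₁, α₂ ⋖ β₂ with α₂, β₂ ∈ C₂, and α₁ ⋖ β₂, α₂ ⋖ β₁, with α₁ ≠ α₂, β₁ ≠ β₂ (a 2-crown). Set D₁ = {z ∈ C₁ : z ≤ α₁} ∪ {z ∈ C₂ : z ≥ β₂} and D₂ = {z ∈ C₂ : z ≤ α₂} ∪ {z ∈ C₁ : z ≥ β₁}. Then D₁ and D₂ are maximal chains of P and e_{C₁} + e_{C₂} = e_{D₁} + e_{D₂} in ℝ^P. -/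
noncomputable def indVec {P : Type*} (C : Set P) : P → ℝ := C.indicator 1

lemma chain_split {P : Type*} [PartialOrder P] {C : Set P} (hC : IsMaxChain (· ≤ ·) C)
    {α β : P} (hα : α ∈ C) (hβ : β ∈ C) (h : α ⋖ β) :
    ∀ z ∈ C, z ≤ α ∨ β ≤ z := by
  intro z hz
  rcases hC.1.total hz hα with h1 | h1
  · exact Or.inl h1
  rcases hC.1.total hz hβ with h2 | h2
  · rcases eq_or_lt_of_le h2 with rfl | h2
    · exact Or.inr le_rfl
    rcases eq_or_lt_of_le h1 with rfl | h1
    · exact Or.inl le_rfl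
    exact absurd h2 (h.2 h1)
  · exact Or.inr h2

lemma maxD {P : Type*} [PartialOrder P] {C₁ C₂ : Set P}
    (hC₁ : IsMaxChain (· ≤ ·) C₁) (hC₂ : IsMaxChain (· ≤ ·) C₂)
    {α₁ β₁ α₂ β₂ : P}
    (hα₁ : α₁ ∈ C₁) (hβ₁ : β₁ ∈ C₁) (hα₂ : α₂ ∈ C₂) (hβ₂ : β₂ ∈ C₂)
    (h11 : α₁ ⋖ β₁) (h22 : α₂ ⋖ β₂) (h12 : α₁ ⋖ β₂) :
    IsMaxChain (· ≤ ·) ({z ∈ C₁ | z ≤ α₁} ∪ {z ∈ C₂ | β₂ ≤ z}) := by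
  have split1 := chain_split hC₁ hα₁ hβ₁ h11
  have split2 := chain_split hC₂ hα₂ hβ₂ h22
  constructor
  · -- it is a chain
    rintro x (⟨hx, hx'⟩ | ⟨hx, hx'⟩) y (⟨hy, hy'⟩ | ⟨hy, hy'⟩) hxy
    · exact hC₁.1 hx hy hxy
    · exact Or.inl (hx'.trans (h12.le.trans hy'))
    · exact Or.inr (hy'.trans (h12.le.trans hx'))
    · exact hC₂.1 hx hy hxy
  · -- maximality
    intro t ht hsub
    refine hsub.antisymm ?_
    intro x hx
    have hxα₁ : x ≤ α₁ ∨ α₁ ≤ x := by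
      rcases eq_or_ne x α₁ with rfl | hne
      · exact Or.inl le_rfl
      · exact ht hx (hsub (Or.inl ⟨hα₁, le_rfl⟩)) hne
    have hxβ₂ : x ≤ β₂ ∨ β₂ ≤ x := by
      rcases eq_or_ne x β₂ with rfl | hne
      · exact Or.inl le_rfl
      · exact ht hx (hsub (Or.inr ⟨hβ₂, le_rfl⟩)) hne
    rcases hxα₁ with hle | hge
    · -- x ≤ α₁ : show x ∈ C₁
      have hxC₁ : x ∈ C₁ := by
        have : IsChain (· ≤ ·) (insert x C₁) := by
          refine hC₁.1.insert ?_
          intro z hz hne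
          rcases split1 z hz with hz' | hz'
          · rcases eq_or_ne x z with rfl | hne'
            · exact Or.inl le_rfl
            · exact ht hx (hsub (Or.inl ⟨hz, hz'⟩)) hne'
          · exact Or.inl (hle.trans (h11.le.trans hz'))
        have := hC₁.2 this (Set.subset_insert _ _)
        rw [this]; exact Set.mem_insert _ _
      exact Or.inl ⟨hxC₁, hle⟩
    rcases hxβ₂ with hle | hge'
    · -- α₁ ≤ x ≤ β₂
      rcases eq_or_lt_of_le hge with rfl | hge
      · exact Or.inl ⟨hα₁, le_rfl⟩
      rcases eq_or_lt_of_le hle with rfl | hle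
      · exact Or.inr ⟨hβ₂, le_rfl⟩
      exact absurd hle (h12.2 hge)
    · -- β₂ ≤ x : show x ∈ C₂
      have hxC₂ : x ∈ C₂ := by
        have : IsChain (· ≤ ·) (insert x C₂) := by
          refine hC₂.1.insert ?_
          intro z hz hne
          rcases split2 z hz with hz' | hz'
          · exact Or.inr (hz'.trans (h22.le.trans hge'))
          · rcases eq_or_ne x z with rfl | hne'
            · exact Or.inl le_rfl
            · exact ht hx (hsub (Or.inr ⟨hz, hz'⟩)) hne'
        have := hC₂.2 this (Set.subset_insert _ _)
        rw [this]; exact Set.mem_insert _ _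
      exact Or.inr ⟨hxC₂, hge'⟩

theorem stmt_12 {P : Type*} [Fintype P] [PartialOrder P]
    (C₁ C₂ : Set P) (hC₁ : IsMaxChain (· ≤ ·) C₁) (hC₂ : IsMaxChain (· ≤ ·) C₂)
    (α₁ β₁ α₂ β₂ : P)
    (hα₁ : α₁ ∈ C₁) (hβ₁ : β₁ ∈ C₁) (hα₂ : α₂ ∈ C₂) (hβ₂ : β₂ ∈ C₂)
    (h11 : α₁ ⋖ β₁) (h22 : α₂ ⋖ β₂) (h12 : α₁ ⋖ β₂) (h21 : α₂ ⋖ β₁)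
    (hαne : α₁ ≠ α₂) (hβne : β₁ ≠ β₂) :
    IsMaxChain (· ≤ ·) ({z ∈ C₁ | z ≤ α₁} ∪ {z ∈ C₂ | β₂ ≤ z}) ∧
    IsMaxChain (· ≤ ·) ({z ∈ C₂ | z ≤ α₂} ∪ {z ∈ C₁ | β₁ ≤ z}) ∧
    indVec C₁ + indVec C₂ =
      indVec ({z ∈ C₁ | z ≤ α₁} ∪ {z ∈ C₂ | β₂ ≤ z}) +
      indVec ({z ∈ C₂ | z ≤ α₂} ∪ {z ∈ C₁ | β₁ ≤ z}) := by
  refine ⟨maxD hC₁ hC₂ hα₁ hβ₁ hα₂ hβ₂ h11 h22 h12,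
    maxD hC₂ hC₁ hα₂ hβ₂ hα₁ hβ₁ h22 h11 h21, ?_⟩
  have split1 := chain_split hC₁ hα₁ hβ₁ h11
  have split2 := chain_split hC₂ hα₂ hβ₂ h22
  have hC₁eq : C₁ = {z ∈ C₁ | z ≤ α₁} ∪ {z ∈ C₁ | β₁ ≤ z} := by
    ext z
    constructor
    · intro hz
      rcases split1 z hz with h | h
      · exact Or.inl ⟨hz, h⟩
      · exact Or.inr ⟨hz, h⟩
    · rintro (⟨hz, _⟩ | ⟨hz, _⟩) <;> exact hz
  have hC₂eq : C₂ = {z ∈ C₂ | z ≤ α₂} ∪ {z ∈ C₂ | β₂ ≤ z} := by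
    ext z
    constructor
    · intro hz
      rcases split2 z hz with h | h
      · exact Or.inl ⟨hz, h⟩
      · exact Or.inr ⟨hz, h⟩
    · rintro (⟨hz, _⟩ | ⟨hz, _⟩) <;> exact hz
  have d11 : Disjoint {z ∈ C₁ | z ≤ α₁} {z ∈ C₁ | β₁ ≤ z} := by
    rw [Set.disjoint_left]
    rintro z ⟨_, h1⟩ ⟨_, h2⟩
    exact absurd (h2.trans h1) (not_le_of_gt h11.lt)
  have d22 : Disjoint {z ∈ C₂ | z ≤ α₂} {z ∈ C₂ | β₂ ≤ z} := by
    rw [Set.disjoint_left]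
    rintro z ⟨_, h1⟩ ⟨_, h2⟩
    exact absurd (h2.trans h1) (not_le_of_gt h22.lt)
  have d12 : Disjoint {z ∈ C₁ | z ≤ α₁} {z ∈ C₂ | β₂ ≤ z} := by
    rw [Set.disjoint_left]
    rintro z ⟨_, h1⟩ ⟨_, h2⟩
    exact absurd (h2.trans h1) (not_le_of_gt h12.lt)
  have d21 : Disjoint {z ∈ C₂ | z ≤ α₂} {z ∈ C₁ | β₁ ≤ z} := by
    rw [Set.disjoint_left]
    rintro z ⟨_, h1⟩ ⟨_, h2⟩
    exact absurd (h2.trans h1) (not_le_of_gt h21.lt)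
  funext p
  simp only [indVec, Pi.add_apply]
  set A₁ := {z ∈ C₁ | z ≤ α₁} with hA₁
  set B₁ := {z ∈ C₁ | β₁ ≤ z} with hB₁
  set A₂ := {z ∈ C₂ | z ≤ α₂} with hA₂
  set B₂ := {z ∈ C₂ | β₂ ≤ z} with hB₂
  rw [hC₁eq, hC₂eq, Set.indicator_union_of_disjoint d11,
    Set.indicator_union_of_disjoint d22, Set.indicator_union_of_disjoint d12,
    Set.indicator_union_of_disjoint d21]
  ring
end

section
/- Let P be a finite poset and 𝒞 a nonempty set of maximal chains of P such that the points {e_C : C ∈ 𝒞} are affinely independent (so conv 𝒞 is a simplex) and conv{e_C : C ∈ 𝒞} is a face of 𝓜(P). Then 𝒞 admits no guided 2-crown: there do not exist C₁, C₂ ∈ 𝒞 and elements α₁, β₁ ∈ C₁, α₂, β₂ ∈ C₂ with α₁ ⋖ β₁, α₂ ⋖ β₂, α₁ ⋖ β₂, α₂ ⋖ β₁, α₁ ≠ α₂, β₁ ≠ β₂. -/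
lemma chainSplit {P : Type*} [PartialOrder P] {C : Set P} {α β : P}
    (hC : IsChain (· ≤ ·) C) (hα : α ∈ C) (hβ : β ∈ C) (hcov : α ⋖ β) :
    ∀ x ∈ C, x ≤ α ∨ β ≤ x := by
  intro x hx
  rcases hC.total hx hα with h | h
  · exact Or.inl h
  · rcases hC.total hx hβ with h' | h'
    · rcases eq_or_lt_of_le h with rfl | hlt
      · exact Or.inl le_rfl
      · rcases eq_or_lt_of_le h' with rfl | hlt'
        · exact Or.inr le_rfl
        · exact absurd hlt' (hcov.2 hlt)
    · exact Or.inr h'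

lemma switch_isMaxChain {P : Type*} [PartialOrder P] {C₁ C₂ : Set P} {α₁ β₁ α₂ β₂ : P}
    (hC₁ : IsMaxChain (· ≤ ·) C₁) (hC₂ : IsMaxChain (· ≤ ·) C₂)
    (hα₁ : α₁ ∈ C₁) (hβ₁ : β₁ ∈ C₁) (hα₂ : α₂ ∈ C₂) (hβ₂ : β₂ ∈ C₂)
    (h11 : α₁ ⋖ β₁) (h22 : α₂ ⋖ β₂) (h12 : α₁ ⋖ β₂) (h21 : α₂ ⋖ β₁) :
    IsMaxChain (· ≤ ·) ({x ∈ C₁ | x ≤ α₁} ∪ {x ∈ C₂ | β₂ ≤ x}) := by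
  constructor
  · rintro a (⟨ha, ha'⟩ | ⟨ha, ha'⟩) b (⟨hb, hb'⟩ | ⟨hb, hb'⟩) hab
    · exact hC₁.1 ha hb hab
    · exact Or.inl (ha'.trans (h12.lt.le.trans hb'))
    · exact Or.inr (hb'.trans (h12.lt.le.trans ha'))
    · exact hC₂.1 ha hb hab
  · intro t ht hsub
    refine Set.Subset.antisymm hsub fun z hz => ?_
    have hα₁t : α₁ ∈ t := hsub (Or.inl ⟨hα₁, le_rfl⟩)
    have hβ₂t : β₂ ∈ t := hsub (Or.inr ⟨hβ₂, le_rfl⟩)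
    rcases ht.total hz hα₁t with h | h
    · -- z ≤ α₁ : insert into C₁
      have hins : IsChain (· ≤ ·) (insert z C₁) := by
        refine hC₁.1.insert fun b hb hne => ?_
        rcases chainSplit hC₁.1 hα₁ hβ₁ h11 b hb with hb' | hb'
        · exact ht.total hz (hsub (Or.inl ⟨hb, hb'⟩))
        · exact Or.inl (h.trans (h11.lt.le.trans hb'))
      have : C₁ = insert z C₁ := hC₁.2 hins (Set.subset_insert _ _)
      have hzC₁ : z ∈ C₁ := this ▸ Set.mem_insert z C₁
      exact Or.inl ⟨hzC₁, h⟩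
    · rcases ht.total hz hβ₂t with h' | h'
      · -- α₁ ≤ z ≤ β₂
        rcases eq_or_lt_of_le h with rfl | hlt
        · exact Or.inl ⟨hα₁, le_rfl⟩
        · rcases eq_or_lt_of_le h' with rfl | hlt'
          · exact Or.inr ⟨hβ₂, le_rfl⟩
          · exact absurd hlt' (h12.2 hlt)
      · -- β₂ ≤ z : insert into C₂
        have hins : IsChain (· ≤ ·) (insert z C₂) := by
          refine hC₂.1.insert fun b hb hne => ?_
          rcases chainSplit hC₂.1 hα₂ hβ₂ h22 b hb with hb' | hb'
          · exact Or.inr (hb'.trans (h22.lt.le.trans h'))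
          · exact (ht.total (hsub (Or.inr ⟨hb, hb'⟩)) hz).symm.imp id id |>.symm |>.elim
              (fun h => Or.inr h) (fun h => Or.inl h)
        have : C₂ = insert z C₂ := hC₂.2 hins (Set.subset_insert _ _)
        have hzC₂ : z ∈ C₂ := this ▸ Set.mem_insert z C₂
        exact Or.inr ⟨hzC₂, h'⟩

open Classical in
lemma indVec_apply {P : Type*} (C : Set P) (x : P) :
    indVec C x = if x ∈ C then 1 else 0 := by
  simp [indVec, Set.indicator_apply]

lemma indVec_nonneg {P : Type*} (C : Set P) (x : P) : 0 ≤ indVec C x := by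
  rw [indVec_apply]; split <;> norm_num

lemma switch_sum {P : Type*} [PartialOrder P] {C₁ C₂ : Set P} {α₁ β₁ α₂ β₂ : P}
    (hC₁ : IsChain (· ≤ ·) C₁) (hC₂ : IsChain (· ≤ ·) C₂)
    (hα₁ : α₁ ∈ C₁) (hβ₁ : β₁ ∈ C₁) (hα₂ : α₂ ∈ C₂) (hβ₂ : β₂ ∈ C₂)
    (h11 : α₁ ⋖ β₁) (h22 : α₂ ⋖ β₂) (h12 : α₁ ⋖ β₂) (h21 : α₂ ⋖ β₁) :
    indVec C₁ + indVec C₂ =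
      indVec ({x ∈ C₁ | x ≤ α₁} ∪ {x ∈ C₂ | β₂ ≤ x}) +
      indVec ({x ∈ C₂ | x ≤ α₂} ∪ {x ∈ C₁ | β₁ ≤ x}) := by
  funext x
  simp only [Pi.add_apply, indVec_apply]
  by_cases h1 : x ∈ C₁ <;> by_cases h2 : x ∈ C₂
  · rcases chainSplit hC₁ hα₁ hβ₁ h11 x h1 with ha | ha <;>
      rcases chainSplit hC₂ hα₂ hβ₂ h22 x h2 with hb | hb
    · have d1 : x ∈ ({x ∈ C₁ | x ≤ α₁} ∪ {x ∈ C₂ | β₂ ≤ x}) := Or.inl ⟨h1, ha⟩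
      have d2 : x ∈ ({x ∈ C₂ | x ≤ α₂} ∪ {x ∈ C₁ | β₁ ≤ x}) := Or.inl ⟨h2, hb⟩
      simp [h1, h2, d1, d2]
    · exact absurd (hb.trans ha) (not_le_of_gt h12.lt)
    · exact absurd (ha.trans hb) (not_le_of_gt h21.lt)
    · have d1 : x ∈ ({x ∈ C₁ | x ≤ α₁} ∪ {x ∈ C₂ | β₂ ≤ x}) := Or.inr ⟨h2, hb⟩
      have d2 : x ∈ ({x ∈ C₂ | x ≤ α₂} ∪ {x ∈ C₁ | β₁ ≤ x}) := Or.inr ⟨h1, ha⟩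
      simp [h1, h2, d1, d2]
  · rcases chainSplit hC₁ hα₁ hβ₁ h11 x h1 with ha | ha
    · have d1 : x ∈ ({x ∈ C₁ | x ≤ α₁} ∪ {x ∈ C₂ | β₂ ≤ x}) := Or.inl ⟨h1, ha⟩
      have d2 : x ∉ ({x ∈ C₂ | x ≤ α₂} ∪ {x ∈ C₁ | β₁ ≤ x}) := by
        rintro (⟨hc, _⟩ | ⟨_, hc⟩)
        · exact h2 hc
        · exact absurd (hc.trans ha) (not_le_of_gt h11.lt)
      simp [h1, h2, d1, d2]
    · have d1 : x ∉ ({x ∈ C₁ | x ≤ α₁} ∪ {x ∈ C₂ | β₂ ≤ x}) := by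
        rintro (⟨_, hc⟩ | ⟨hc, _⟩)
        · exact absurd (ha.trans hc) (not_le_of_gt h11.lt)
        · exact h2 hc
      have d2 : x ∈ ({x ∈ C₂ | x ≤ α₂} ∪ {x ∈ C₁ | β₁ ≤ x}) := Or.inr ⟨h1, ha⟩
      simp [h1, h2, d1, d2]
  · rcases chainSplit hC₂ hα₂ hβ₂ h22 x h2 with ha | ha
    · have d2 : x ∈ ({x ∈ C₂ | x ≤ α₂} ∪ {x ∈ C₁ | β₁ ≤ x}) := Or.inl ⟨h2, ha⟩
      have d1 : x ∉ ({x ∈ C₁ | x ≤ α₁} ∪ {x ∈ C₂ | β₂ ≤ x}) := by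
        rintro (⟨hc, _⟩ | ⟨_, hc⟩)
        · exact h1 hc
        · exact absurd (hc.trans ha) (not_le_of_gt h22.lt)
      simp [h1, h2, d1, d2]
    · have d2 : x ∉ ({x ∈ C₂ | x ≤ α₂} ∪ {x ∈ C₁ | β₁ ≤ x}) := by
        rintro (⟨_, hc⟩ | ⟨hc, _⟩)
        · exact absurd (ha.trans hc) (not_le_of_gt h22.lt)
        · exact h1 hc
      have d1 : x ∈ ({x ∈ C₁ | x ≤ α₁} ∪ {x ∈ C₂ | β₂ ≤ x}) := Or.inr ⟨h2, ha⟩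
      simp [h1, h2, d1, d2]
  · have d1 : x ∉ ({x ∈ C₁ | x ≤ α₁} ∪ {x ∈ C₂ | β₂ ≤ x}) := by
      rintro (⟨hc, _⟩ | ⟨hc, _⟩); exacts [h1 hc, h2 hc]
    have d2 : x ∉ ({x ∈ C₂ | x ≤ α₂} ∪ {x ∈ C₁ | β₁ ≤ x}) := by
      rintro (⟨hc, _⟩ | ⟨hc, _⟩); exacts [h2 hc, h1 hc]
    simp [h1, h2, d1, d2]

lemma mem_convexHull_range_exists {ι E : Type*} [Fintype ι] [AddCommGroup E] [Module ℝ E]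
    {f : ι → E} {x : E} (hx : x ∈ convexHull ℝ (Set.range f)) :
    ∃ w : ι → ℝ, (∀ i, 0 ≤ w i) ∧ ∑ i, w i = 1 ∧ ∑ i, w i • f i = x := by
  classical
  rw [convexHull_range_eq_exists_affineCombination] at hx
  obtain ⟨s, w, h0, h1, he⟩ := hx
  refine ⟨fun i => if i ∈ s then w i else 0, fun i => ?_, ?_, ?_⟩
  · by_cases h : i ∈ s
    · simpa [h] using h0 _ h
    · simp [h]
  · rw [Finset.sum_ite_mem, Finset.univ_inter]; exact h1
  · rw [← he, Finset.affineCombination_eq_linear_combination _ _ _ h1]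
    simp only [ite_smul, zero_smul]
    rw [Finset.sum_ite_mem, Finset.univ_inter]

noncomputable def maxChainPolytope (P : Type*) [PartialOrder P] : Set (P → ℝ) :=
  convexHull ℝ (indVec '' {C : Set P | IsMaxChain (· ≤ ·) C})

theorem stmt_19 {P : Type*} [Fintype P] [PartialOrder P]
    (𝒞 : Set (Set P)) (h0 : 𝒞.Nonempty) (h1 : ∀ C ∈ 𝒞, IsMaxChain (· ≤ ·) C)
    (hindep : AffineIndependent ℝ (fun C : 𝒞 => indVec (C : Set P)))
    (hface : IsExposed ℝ (maxChainPolytope P) (convexHull ℝ (indVec '' 𝒞))) :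
    ¬ ∃ (C₁ : Set P) (_ : C₁ ∈ 𝒞) (C₂ : Set P) (_ : C₂ ∈ 𝒞) (α₁ β₁ α₂ β₂ : P),
        α₁ ∈ C₁ ∧ β₁ ∈ C₁ ∧ α₂ ∈ C₂ ∧ β₂ ∈ C₂ ∧
        α₁ ⋖ β₁ ∧ α₂ ⋖ β₂ ∧ α₁ ⋖ β₂ ∧ α₂ ⋖ β₁ ∧ α₁ ≠ α₂ ∧ β₁ ≠ β₂ := by
  classical
  rintro ⟨C₁, hC₁m, C₂, hC₂m, α₁, β₁, α₂, β₂, hα₁, hβ₁, hα₂, hβ₂, h11, h22, h12, h21, hαne, hβne⟩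
  have hC₁ := h1 C₁ hC₁m
  have hC₂ := h1 C₂ hC₂m
  set D₁ : Set P := {x ∈ C₁ | x ≤ α₁} ∪ {x ∈ C₂ | β₂ ≤ x} with hD₁def
  set D₂ : Set P := {x ∈ C₂ | x ≤ α₂} ∪ {x ∈ C₁ | β₁ ≤ x} with hD₂def
  have hD₁ : IsMaxChain (· ≤ ·) D₁ :=
    switch_isMaxChain hC₁ hC₂ hα₁ hβ₁ hα₂ hβ₂ h11 h22 h12 h21
  have hD₂ : IsMaxChain (· ≤ ·) D₂ :=
    switch_isMaxChain hC₂ hC₁ hα₂ hβ₂ hα₁ hβ₁ h22 h11 h21 h12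
  have hsum : indVec C₁ + indVec C₂ = indVec D₁ + indVec D₂ :=
    switch_sum hC₁.1 hC₂.1 hα₁ hβ₁ hα₂ hβ₂ h11 h22 h12 h21
  have hα₁C₂ : α₁ ∉ C₂ := by
    intro h
    rcases hC₂.1.total h hα₂ with hle | hle
    · exact h12.2 (hle.lt_of_ne hαne) h22.lt
    · exact h21.2 (hle.lt_of_ne (Ne.symm hαne)) h11.lt
  have hα₁D₁ : α₁ ∈ D₁ := Or.inl ⟨hα₁, le_rfl⟩
  have hβ₁D₁ : β₁ ∉ D₁ := by
    rintro (⟨_, hc⟩ | ⟨hc, hc'⟩)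
    · exact not_le_of_gt h11.lt hc
    · exact h21.2 h22.lt (hc'.lt_of_ne (Ne.symm hβne))
  have hC₁₂ : C₁ ≠ C₂ := fun h => hα₁C₂ (h ▸ hα₁)
  -- exposed face part
  obtain ⟨C₀, hC₀⟩ := h0
  have hBne : (convexHull ℝ (indVec '' 𝒞)).Nonempty :=
    ⟨indVec C₀, subset_convexHull _ _ (Set.mem_image_of_mem _ hC₀)⟩
  obtain ⟨l, hB⟩ := hface hBne
  set m : P → ℝ := (2⁻¹ : ℝ) • (indVec C₁ + indVec C₂) with hmdef
  have hmB : m ∈ convexHull ℝ (indVec '' 𝒞) := by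
    have hx : indVec C₁ ∈ convexHull ℝ (indVec '' 𝒞) :=
      subset_convexHull _ _ (Set.mem_image_of_mem _ hC₁m)
    have hy : indVec C₂ ∈ convexHull ℝ (indVec '' 𝒞) :=
      subset_convexHull _ _ (Set.mem_image_of_mem _ hC₂m)
    have := (convex_convexHull ℝ (indVec '' 𝒞)) hx hy (by norm_num) (by norm_num)
      (by norm_num : (2⁻¹ : ℝ) + 2⁻¹ = 1)
    simpa [hmdef, smul_add] using this
  rw [hB] at hmB
  obtain ⟨hmM, hmax⟩ := hmB
  have hd₁M : indVec D₁ ∈ maxChainPolytope P :=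
    subset_convexHull _ _ (Set.mem_image_of_mem _ hD₁)
  have hd₂M : indVec D₂ ∈ maxChainPolytope P :=
    subset_convexHull _ _ (Set.mem_image_of_mem _ hD₂)
  have hle₁ := hmax _ hd₁M
  have hle₂ := hmax _ hd₂M
  have hlm : l m = 2⁻¹ * (l (indVec D₁) + l (indVec D₂)) := by
    have hm2 : m = (2⁻¹ : ℝ) • (indVec D₁ + indVec D₂) := by rw [hmdef, hsum]
    rw [hm2, map_smul, map_add, smul_eq_mul]
  have he₁ : l (indVec D₁) = l m := by linarith
  have he₂ : l (indVec D₂) = l m := by linarith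
  have hd₁B : indVec D₁ ∈ convexHull ℝ (indVec '' 𝒞) := by
    rw [hB]; exact ⟨hd₁M, fun y hy => he₁ ▸ hmax y hy⟩
  have hd₂B : indVec D₂ ∈ convexHull ℝ (indVec '' 𝒞) := by
    rw [hB]; exact ⟨hd₂M, fun y hy => he₂ ▸ hmax y hy⟩
  -- representation part
  haveI : Fintype ↥𝒞 := Fintype.ofFinite _
  have himg : indVec '' 𝒞 = Set.range (fun C : 𝒞 => indVec (C : Set P)) :=
    Set.image_eq_range _ _
  rw [himg] at hd₁B hd₂B
  obtain ⟨u₁, hu₁0, hu₁s, hu₁c⟩ := mem_convexHull_range_exists hd₁B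
  obtain ⟨u₂, hu₂0, hu₂s, hu₂c⟩ := mem_convexHull_range_exists hd₂B
  set c₁ : ↥𝒞 := ⟨C₁, hC₁m⟩ with hc₁def
  set c₂ : ↥𝒞 := ⟨C₂, hC₂m⟩ with hc₂def
  have hcne : c₁ ≠ c₂ := fun h => hC₁₂ (congrArg Subtype.val h)
  set w : ↥𝒞 → ℝ := fun i =>
    (if i = c₁ then (1 : ℝ) else 0) + (if i = c₂ then (1 : ℝ) else 0) - u₁ i - u₂ i with hwdef
  have hwsum : ∑ i, w i = 0 := by
    simp [hwdef, Finset.sum_add_distrib, Finset.sum_sub_distrib, hu₁s, hu₂s,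
      Finset.sum_ite_eq']
  have hlin : ∑ i, w i • (fun C : 𝒞 => indVec (C : Set P)) i
      = indVec C₁ + indVec C₂ - indVec D₁ - indVec D₂ := by
    simp only [hwdef, sub_smul, add_smul, ite_smul, one_smul, zero_smul,
      Finset.sum_sub_distrib, Finset.sum_add_distrib, Finset.sum_ite_eq',
      Finset.mem_univ, if_true, hu₁c, hu₂c, hc₁def, hc₂def]
  have hwvsub : Finset.univ.weightedVSub (fun C : 𝒞 => indVec (C : Set P)) w = (0 : P → ℝ) := by
    rw [Finset.weightedVSub_eq_linear_combination _ hwsum, hlin, hsum]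
    abel
  have hwz := (affineIndependent_iff_of_fintype ℝ _).mp hindep w hwsum hwvsub
  have hu₁supp : ∀ i, i ≠ c₁ → i ≠ c₂ → u₁ i = 0 := by
    intro i hi1 hi2
    have h := hwz i
    simp [hwdef, hi1, hi2] at h
    have := hu₁0 i
    have := hu₂0 i
    linarith
  have hshrink : ∑ i, u₁ i • (fun C : 𝒞 => indVec (C : Set P)) i
      = ∑ i ∈ ({c₁, c₂} : Finset ↥𝒞), u₁ i • (fun C : 𝒞 => indVec (C : Set P)) i := by
    refine (Finset.sum_subset (Finset.subset_univ _) fun i _ hi => ?_).symm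
    simp only [Finset.mem_insert, Finset.mem_singleton, not_or] at hi
    simp [hu₁supp i hi.1 hi.2]
  have hd₁eq : indVec D₁ = u₁ c₁ • indVec C₁ + u₁ c₂ • indVec C₂ := by
    rw [← hu₁c, hshrink, Finset.sum_pair hcne]
  have hsum12 : u₁ c₁ + u₁ c₂ = 1 := by
    have : ∑ i, u₁ i = ∑ i ∈ ({c₁, c₂} : Finset ↥𝒞), u₁ i := by
      refine (Finset.sum_subset (Finset.subset_univ _) fun i _ hi => ?_).symm
      simp only [Finset.mem_insert, Finset.mem_singleton, not_or] at hi
      exact hu₁supp i hi.1 hi.2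
    rw [this, Finset.sum_pair hcne] at hu₁s
    exact hu₁s
  have hzero₁ : u₁ c₁ = 0 := by
    have h := congrFun hd₁eq β₁
    simp only [Pi.add_apply, Pi.smul_apply, smul_eq_mul, indVec_apply] at h
    rw [if_neg hβ₁D₁, if_pos hβ₁] at h
    have ht : (0:ℝ) ≤ if β₁ ∈ C₂ then (1:ℝ) else 0 := by split <;> norm_num
    have h2 := mul_nonneg (hu₁0 c₂) ht
    have h1 := hu₁0 c₁
    linarith
  have hone : u₁ c₂ = 1 := by linarith
  have hDeq : indVec D₁ = indVec C₂ := by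
    rw [hd₁eq, hzero₁, hone]; simp
  have h := congrFun hDeq α₁
  rw [indVec_apply, indVec_apply, if_pos hα₁D₁, if_neg hα₁C₂] at h
  norm_num at h
end
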